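/- Let 𝒫 be any of the properties SBrSNNI, P_BrNDC, SBrNDC. If P ∈ 𝒫, then a.P ∈ 𝒫 for every action a ∈ A_L ∪ {τ} (the local branching-bisimilarity-based noninterference properties are compositional with respect to low/unobservable action prefix). -/

import Mathlib

/-!
A prefix `a.P` reaches only itself and what `P` reaches, so each local property only has to be
checked at `a.P`. Its single move is the low or silent step `a`, which each of the contexts
`∖A_H`, `/A_H` and `((· ∥_L Q)/L)∖A_H` lets through unchanged: both sides answer it with the
same step and land in the same contexts around `P`, related by hypothesis. Meanwhile `Q` can
only move silently (its actions lie in `L` and are hidden, or are blocked by `∖A_H`), which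
branching bisimilarity absorbs as stuttering.
-/

namespace SecurityNI

/-- Process terms: `0`, action prefix (`none` = τ, `some a` = observable action),
choice, CSP-style parallel composition with synchronization set, restriction,
hiding, and constants (whose defining equations are given by an environment). -/
inductive Proc (A : Type) (C : Type) : Type where
  | nil : Proc A C
  | pre : Option A → Proc A C → Proc A C
  | choice : Proc A C → Proc A C → Proc A C
  | par : Set A → Proc A C → Proc A C → Proc A C
  | restrict : Proc A C → Set A → Proc A C
  | hide : Proc A C → Set A → Proc A C
  | const : C → Proc A C

variable {A C : Type}

/-- A process term is guarded when every constant occurrence is in the scope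
of an action prefix operator. -/
def Guarded : Proc A C → Prop
  | .nil => True
  | .pre _ _ => True
  | .choice p q => Guarded p ∧ Guarded q
  | .par _ p q => Guarded p ∧ Guarded q
  | .restrict p _ => Guarded p
  | .hide p _ => Guarded p
  | .const _ => False

/-- Operational semantics, parameterized by the defining equations `env` of
the constants.  Labels are `Option A`, with `none` playing the role of τ. -/
inductive Trans (env : C → Proc A C) : Proc A C → Option A → Proc A C → Prop where
  | pre (a : Option A) (p : Proc A C) : Trans env (.pre a p) a p
  | choiceL {p q a p'} (h : Trans env p a p') : Trans env (.choice p q) a p'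
  | choiceR {p q a q'} (h : Trans env q a q') : Trans env (.choice p q) a q'
  | parL {L p q a p'} (h : Trans env p a p') (hn : ∀ x, a = some x → x ∉ L) :
      Trans env (.par L p q) a (.par L p' q)
  | parR {L p q a q'} (h : Trans env q a q') (hn : ∀ x, a = some x → x ∉ L) :
      Trans env (.par L p q) a (.par L p q')
  | sync {L p q x p' q'} (h1 : Trans env p (some x) p') (h2 : Trans env q (some x) q')
      (hx : x ∈ L) : Trans env (.par L p q) (some x) (.par L p' q')
  | res {p a p' L} (h : Trans env p a p') (hn : ∀ x, a = some x → x ∉ L) :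
      Trans env (.restrict p L) a (.restrict p' L)
  | hideIn {p x p' L} (h : Trans env p (some x) p') (hx : x ∈ L) :
      Trans env (.hide p L) none (.hide p' L)
  | hideOut {p a p' L} (h : Trans env p a p') (hn : ∀ x, a = some x → x ∉ L) :
      Trans env (.hide p L) a (.hide p' L)
  | const {c a p'} (h : Trans env (env c) a p') : Trans env (.const c) a p'

section LTS

variable {S : Type} (tr : S → Option A → S → Prop)

/-- Finitely many (possibly zero) τ-transitions. -/
def TauStar : S → S → Prop :=
  Relation.ReflTransGen (fun s s' => tr s none s')

/-- `B` is a branching bisimulation. -/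
def IsBranchingBisim (B : S → S → Prop) : Prop :=
  Symmetric B ∧
    ∀ s1 s2, B s1 s2 → ∀ a s1', tr s1 a s1' →
      (a = none ∧ B s1' s2) ∨
      (∃ s2b s2', TauStar tr s2 s2b ∧ tr s2b a s2' ∧ B s1 s2b ∧ B s1' s2')

/-- Branching bisimilarity `≈_b`. -/
def BrBisim (s1 s2 : S) : Prop :=
  ∃ B, IsBranchingBisim tr B ∧ B s1 s2

/-- `B` is a weak bisimulation. -/
def IsWeakBisim (B : S → S → Prop) : Prop :=
  Symmetric B ∧
    ∀ s1 s2, B s1 s2 →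
      (∀ s1', tr s1 none s1' → ∃ s2', TauStar tr s2 s2' ∧ B s1' s2') ∧
      (∀ x s1', tr s1 (some x) s1' →
        ∃ t t' s2', TauStar tr s2 t ∧ tr t (some x) t' ∧ TauStar tr t' s2' ∧ B s1' s2')

/-- Weak bisimilarity `≈`. -/
def WeakBisim (s1 s2 : S) : Prop :=
  ∃ B, IsWeakBisim tr B ∧ B s1 s2

/-- Reachability via finitely many transitions. -/
def Reach : S → S → Prop :=
  Relation.ReflTransGen (fun s s' => ∃ a, tr s a s')

end LTS

section Security

variable (env : C → Proc A C) (AH : Set A)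

/-- `P ∈ BrSNNI` iff `P∖A_H ≈_b P/A_H`. -/
def BrSNNI (p : Proc A C) : Prop :=
  BrBisim (Trans env) (.restrict p AH) (.hide p AH)

/-- All processes reachable from `q` perform only actions in `AH`. -/
def HighOnly (q : Proc A C) : Prop :=
  ∀ q', Reach (Trans env) q q' → ∀ a q'', Trans env q' a q'' → ∃ h ∈ AH, a = some h

/-- `P ∈ BrNDC` iff `P∖A_H ≈_b ((P ∥_L Q)/L)∖A_H` for every high-level `Q`
and every `L ⊆ A_H`. -/
def BrNDC (p : Proc A C) : Prop :=
  ∀ q, HighOnly env AH q → ∀ L, L ⊆ AH →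
    BrBisim (Trans env) (.restrict p AH) (.restrict (.hide (.par L p q) L) AH)

/-- `P ∈ SBrSNNI` iff every reachable process is BrSNNI. -/
def SBrSNNI (p : Proc A C) : Prop :=
  ∀ p', Reach (Trans env) p p' → BrSNNI env AH p'

/-- `P ∈ P_BrNDC` iff every reachable process is BrNDC. -/
def PBrNDC (p : Proc A C) : Prop :=
  ∀ p', Reach (Trans env) p p' → BrNDC env AH p'

/-- `P ∈ SBrNDC` iff for every reachable `P'` and every high transition
`P' --h→ P''`, `P'∖A_H ≈_b P''∖A_H`. -/
def SBrNDC (p : Proc A C) : Prop :=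
  ∀ p' p'', Reach (Trans env) p p' → ∀ h ∈ AH, Trans env p' (some h) p'' →
    BrBisim (Trans env) (.restrict p' AH) (.restrict p'' AH)

/-- `P ∈ BSNNI` iff `P∖A_H ≈ P/A_H`. -/
def BSNNI (p : Proc A C) : Prop :=
  WeakBisim (Trans env) (.restrict p AH) (.hide p AH)

/-- `P ∈ BNDC` iff `P∖A_H ≈ ((P ∥_L Q)/L)∖A_H` for every high-level `Q`
and every `L ⊆ A_H`. -/
def BNDC (p : Proc A C) : Prop :=
  ∀ q, HighOnly env AH q → ∀ L, L ⊆ AH →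
    WeakBisim (Trans env) (.restrict p AH) (.restrict (.hide (.par L p q) L) AH)

/-- `P ∈ SBSNNI` iff every reachable process is BSNNI. -/
def SBSNNI (p : Proc A C) : Prop :=
  ∀ p', Reach (Trans env) p p' → BSNNI env AH p'

/-- `P ∈ P_BNDC` iff every reachable process is BNDC. -/
def PBNDC (p : Proc A C) : Prop :=
  ∀ p', Reach (Trans env) p p' → BNDC env AH p'

/-- `P ∈ SBNDC` iff for every reachable `P'` and every high transition
`P' --h→ P''`, `P'∖A_H ≈ P''∖A_H`. -/
def SBNDC (p : Proc A C) : Prop :=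
  ∀ p' p'', Reach (Trans env) p p' → ∀ h ∈ AH, Trans env p' (some h) p'' →
    WeakBisim (Trans env) (.restrict p' AH) (.restrict p'' AH)

/-- No high-level actions occur in `p`: no process reachable from `p`
can perform a high-level action. -/
def NoHigh (p : Proc A C) : Prop :=
  ∀ p', Reach (Trans env) p p' → ∀ h ∈ AH, ∀ p'', ¬ Trans env p' (some h) p''

end Security

section UpTo

variable {S : Type} {tr : S → Option A → S → Prop}

def BranchingMatch (tr : S → Option A → S → Prop) (B : S → S → Prop) (s1 s2 : S) (a : Option A)
    (s1' : S) : Prop :=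
  (a = none ∧ B s1' s2) ∨
    (∃ s2b s2', TauStar tr s2 s2b ∧ tr s2b a s2' ∧ B s1 s2b ∧ B s1' s2')

def BranchingTransfer (tr : S → Option A → S → Prop) (B : S → S → Prop) (s1 s2 : S) : Prop :=
  ∀ a s1', tr s1 a s1' → BranchingMatch tr B s1 s2 a s1'

theorem BranchingMatch.of_step {B : S → S → Prop} {s1 s2 s1' s2' : S} {a : Option A}
    (hB : B s1 s2) (hstep : tr s2 a s2') (hB' : B s1' s2') : BranchingMatch tr B s1 s2 a s1' :=
  Or.inr ⟨s2, s2', .refl, hstep, hB, hB'⟩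

theorem BranchingTransfer.mono {B B' : S → S → Prop} (hBB' : ∀ x y, B x y → B' x y)
    {s1 s2 : S} (h : BranchingTransfer tr B s1 s2) : BranchingTransfer tr B' s1 s2 := by
  intro a s1' hs
  rcases h a s1' hs with ⟨rfl, hB⟩ | ⟨s2b, s2', hτ, hstep, hB, hB'⟩
  · exact Or.inl ⟨rfl, hBB' _ _ hB⟩
  · exact Or.inr ⟨s2b, s2', hτ, hstep, hBB' _ _ hB, hBB' _ _ hB'⟩

theorem isBranchingBisim_brBisim : IsBranchingBisim tr (BrBisim tr) := by
  refine ⟨fun s t ⟨B, hB, hst⟩ => ⟨B, hB, hB.1 hst⟩, ?_⟩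
  rintro s1 s2 ⟨B, hB, h12⟩
  exact BranchingTransfer.mono (fun x y hxy => ⟨B, hB, hxy⟩) (hB.2 s1 s2 h12)

theorem BrBisim.symm {s t : S} (h : BrBisim tr s t) : BrBisim tr t s :=
  isBranchingBisim_brBisim.1 h

def SymmUpToBrBisim (tr : S → Option A → S → Prop) (R : S → S → Prop) (x y : S) : Prop :=
  R x y ∨ R y x ∨ BrBisim tr x y

/-- Branching bisimulation up to `≈_b`. -/
theorem brBisim_of_branchingTransfer (R : S → S → Prop)
    (hR : ∀ s1 s2, R s1 s2 →
      BranchingTransfer tr (SymmUpToBrBisim tr R) s1 s2 ∧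
      BranchingTransfer tr (SymmUpToBrBisim tr R) s2 s1)
    {s t : S} (hst : R s t) : BrBisim tr s t := by
  refine ⟨SymmUpToBrBisim tr R, ⟨?_, ?_⟩, Or.inl hst⟩
  · rintro x y (h | h | h)
    exacts [Or.inr (Or.inl h), Or.inl h, Or.inr (Or.inr h.symm)]
  · intro s1 s2 h
    change BranchingTransfer tr (SymmUpToBrBisim tr R) s1 s2
    rcases h with h | h | h
    · exact (hR s1 s2 h).1
    · exact (hR s2 s1 h).2
    · exact BranchingTransfer.mono (fun _ _ hxy => Or.inr (Or.inr hxy))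
        (isBranchingBisim_brBisim.2 s1 s2 h)

end UpTo

variable {env : C → Proc A C} {AH : Set A}

theorem trans_pre_iff {a b : Option A} {P s : Proc A C} :
    Trans env (.pre a P) b s ↔ b = a ∧ s = P := by
  constructor
  · rintro ⟨⟩
    exact ⟨rfl, rfl⟩
  · rintro ⟨rfl, rfl⟩
    exact .pre _ _

theorem reach_pre {a : Option A} {P s : Proc A C} (h : Reach (Trans env) (.pre a P) s) :
    s = .pre a P ∨ Reach (Trans env) P s := by
  rcases Relation.ReflTransGen.cases_head h with h | ⟨_, ⟨_, hstep⟩, hrest⟩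
  · exact Or.inl h.symm
  · obtain ⟨rfl, rfl⟩ := trans_pre_iff.1 hstep
    exact Or.inr hrest

theorem forall_reach_pre {Φ : Proc A C → Prop} {a : Option A} {P : Proc A C}
    (hpre : Φ (.pre a P)) (hP : ∀ p', Reach (Trans env) P p' → Φ p') :
    ∀ p', Reach (Trans env) (.pre a P) p' → Φ p' := by
  intro p' hr
  rcases reach_pre hr with rfl | hr
  exacts [hpre, hP p' hr]

theorem HighOnly.trans_high {q q' : Proc A C} {b : Option A} (hq : HighOnly env AH q)
    (h : Trans env q b q') : ∃ x ∈ AH, b = some x :=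
  hq q .refl b q' h

theorem HighOnly.of_trans {q q' : Proc A C} {b : Option A} (hq : HighOnly env AH q)
    (h : Trans env q b q') : HighOnly env AH q' :=
  fun q'' hr => hq q'' (.head ⟨b, h⟩ hr)

section Prefix

variable {a : Option A} {P : Proc A C}

theorem brSNNI_pre (ha : ∀ x, a = some x → x ∉ AH) (hP : BrSNNI env AH P) :
    BrSNNI env AH (.pre a P) := by
  refine brBisim_of_branchingTransfer
    (fun s t : Proc A C => s = .restrict (.pre a P) AH ∧ t = .hide (.pre a P) AH) ?_ ⟨rfl, rfl⟩
  rintro _ _ ⟨rfl, rfl⟩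
  constructor
  · intro b _ hstep
    cases hstep with
    | res hpre _ =>
      obtain ⟨rfl, rfl⟩ := trans_pre_iff.1 hpre
      exact .of_step (Or.inl ⟨rfl, rfl⟩) (.hideOut (.pre _ _) ha) (Or.inr (Or.inr hP))
  · intro b _ hstep
    cases hstep with
    | hideIn hpre hx => exact absurd hx (ha _ (trans_pre_iff.1 hpre).1.symm)
    | hideOut hpre _ =>
      obtain ⟨rfl, rfl⟩ := trans_pre_iff.1 hpre
      exact .of_step (Or.inr (Or.inl ⟨rfl, rfl⟩)) (.res (.pre _ _) ha) (Or.inr (Or.inr hP.symm))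

theorem brNDC_pre (ha : ∀ x, a = some x → x ∉ AH) (hP : BrNDC env AH P) :
    BrNDC env AH (.pre a P) := by
  intro q hq L hL
  have haL : ∀ x, a = some x → x ∉ L := fun x hx hxL => ha x hx (hL hxL)
  refine brBisim_of_branchingTransfer (fun s t : Proc A C => ∃ q', HighOnly env AH q' ∧
      s = .restrict (.pre a P) AH ∧ t = .restrict (.hide (.par L (.pre a P) q') L) AH)
    ?_ ⟨q, hq, rfl, rfl⟩
  rintro _ _ ⟨q, hq, rfl, rfl⟩
  constructor
  · intro b _ hstep
    cases hstep with
    | res hpre _ =>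
      obtain ⟨rfl, rfl⟩ := trans_pre_iff.1 hpre
      exact .of_step (Or.inl ⟨q, hq, rfl, rfl⟩) (.res (.hideOut (.parL (.pre _ _) haL) haL) ha)
        (Or.inr (Or.inr (hP q hq L hL)))
  · intro b _ hstep
    cases hstep with
    | res hhide hbAH =>
    cases hhide with
    | hideIn hpar hxL =>
      cases hpar with
      | parL hpre _ => exact absurd (hL hxL) (ha _ (trans_pre_iff.1 hpre).1.symm)
      | parR hq' _ => exact Or.inl ⟨rfl, Or.inr (Or.inl ⟨_, hq.of_trans hq', rfl, rfl⟩)⟩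
      | sync hpre _ hx => exact absurd (hL hx) (ha _ (trans_pre_iff.1 hpre).1.symm)
    | hideOut hpar hbL =>
      cases hpar with
      | parL hpre _ =>
        obtain ⟨rfl, rfl⟩ := trans_pre_iff.1 hpre
        exact .of_step (Or.inr (Or.inl ⟨q, hq, rfl, rfl⟩)) (.res (.pre _ _) ha)
          (Or.inr (Or.inr (hP q hq L hL).symm))
      | parR hq' _ =>
        obtain ⟨x, hx, rfl⟩ := hq.trans_high hq'
        exact absurd hx (hbAH x rfl)
      | sync _ _ hx => exact absurd hx (hbL _ rfl)

end Prefix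

theorem prefix_compositionality_general {A C : Type} (env : C → Proc A C)
    (AH : Set A)
    (a : Option A) (ha : ∀ x, a = some x → x ∉ AH) (P : Proc A C) :
    (SBrSNNI env AH P → SBrSNNI env AH (Proc.pre a P)) ∧
    (PBrNDC env AH P → PBrNDC env AH (Proc.pre a P)) ∧
    (SBrNDC env AH P → SBrNDC env AH (Proc.pre a P)) := by
  refine ⟨fun hP => ?_, fun hP => ?_, fun hP => ?_⟩
  · exact forall_reach_pre (brSNNI_pre ha (hP P .refl)) hP
  · exact forall_reach_pre (brNDC_pre ha (hP P .refl)) hP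
  · intro p' p'' hr h hh hstep
    rcases reach_pre hr with rfl | hr
    · exact absurd hh (ha h (trans_pre_iff.1 hstep).1.symm)
    · exact hP p' p'' hr h hh hstep

/-- SBrSNNI, P_BrNDC and SBrNDC are compositional w.r.t.
prefixing by a low-level or unobservable action. -/
theorem prefix_compositionality {A C : Type} (env : C → Proc A C)
    (hguard : ∀ c, Guarded (env c)) (AH : Set A)
    (a : Option A) (ha : ∀ x, a = some x → x ∉ AH) (P : Proc A C) :
    (SBrSNNI env AH P → SBrSNNI env AH (Proc.pre a P)) ∧
    (PBrNDC env AH P → PBrNDC env AH (Proc.pre a P)) ∧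
    (SBrNDC env AH P → SBrNDC env AH (Proc.pre a P)) :=
  prefix_compositionality_general env AH a ha P

end SecurityNI
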